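/- arXiv:2001.07878 — 2 statements merged into one kernel-verified Lean document; each statement's English description precedes it below -/
import Mathlib

section
/- Let M be an n×n matrix of type (*). For any 1 ≤ j ≤ n−1, det(M(1,j))·det(M(j+1,n)) = Σ_{e ∈ ℰⁿ, j+1 ∈ e} d_M(e), the sum over those increasing sequences from 1 to n+1 that contain j+1. In particular det(M(1,j))·det(M(j+1,n)) ≤ det(M). -/
/-- `A` (with 1-based indices `1..n`) is a matrix of type (*): positive on and above the
diagonal, negative on the subdiagonal, zero below the subdiagonal. -/
def TypeStar (A : ℕ → ℕ → ℝ) (n : ℕ) : Prop :=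
  ∀ i j, 1 ≤ i → i ≤ n → 1 ≤ j → j ≤ n →
    (i ≤ j → 0 < A i j) ∧ (i = j + 1 → A i j < 0) ∧ (i > j + 1 → A i j = 0)

/-- Determinant of the block `M(i,j)` of `A` with (1-based) row/column indices `i..j`. -/
noncomputable def subDet (A : ℕ → ℕ → ℝ) (i j : ℕ) : ℝ :=
  (Matrix.of fun r c : Fin (j - i + 1) => A (i + (r : ℕ)) (i + (c : ℕ))).det

/-- `d(M(i,j))`: top-right entry of the block times the absolute values of its
subdiagonal entries. -/
noncomputable def dBlock (A : ℕ → ℕ → ℝ) (i j : ℕ) : ℝ :=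
  A i j * ∏ r ∈ Finset.Icc (i + 1) j, |A r (r - 1)|

/-- `d_M(e) = ∏ d(M(e_i, e_{i+1} - 1))` over consecutive pairs of the sequence `e`. -/
noncomputable def dSeq (A : ℕ → ℕ → ℝ) (e : List ℕ) : ℝ :=
  ((e.zip e.tail).map (fun p => dBlock A p.1 (p.2 - 1))).prod

lemma dSeq_nil (A : ℕ → ℕ → ℝ) : dSeq A [] = 1 := by simp [dSeq]

lemma dSeq_single (A : ℕ → ℕ → ℝ) (a : ℕ) : dSeq A [a] = 1 := by simp [dSeq]

lemma dSeq_cons_cons (A : ℕ → ℕ → ℝ) (a b : ℕ) (l : List ℕ) :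
    dSeq A (a :: b :: l) = dBlock A a (b - 1) * dSeq A (b :: l) := by
  simp [dSeq]

lemma dSeq_append (A : ℕ → ℕ → ℝ) (l1 l2 : List ℕ) (a : ℕ) :
    dSeq A (l1 ++ a :: l2) = dSeq A (l1 ++ [a]) * dSeq A (a :: l2) := by
  induction l1 with
  | nil => simp [dSeq_single]
  | cons x t ih =>
    cases t with
    | nil => simp [dSeq_cons_cons, dSeq_single]
    | cons y t2 =>
      simp only [List.cons_append, dSeq_cons_cons] at *
      rw [ih]; ring

lemma dSeq_concat_concat (A : ℕ → ℕ → ℝ) (l : List ℕ) (a b : ℕ) :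
    dSeq A (l ++ [a, b]) = dSeq A (l ++ [a]) * dBlock A a (b - 1) := by
  have := dSeq_append A l [b] a
  simpa [dSeq_cons_cons, dSeq_single] using this

lemma sortEq (s : Finset ℕ) (l : List ℕ) (h1 : l.Pairwise (· < ·))
    (h2 : ∀ x, x ∈ l ↔ x ∈ s) : Finset.sort s (· ≤ ·) = l := by
  have hn : l.Nodup := h1.imp ne_of_lt
  have hfs : l.toFinset = s := by ext x; simp [h2, List.mem_toFinset]
  rw [← hfs]
  exact (List.toFinset_sort (r := (· ≤ ·)) hn).mpr (h1.imp le_of_lt)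

lemma sortInsertMax {k : ℕ} {s : Finset ℕ} (h : ∀ b ∈ s, b < k) :
    Finset.sort (insert k s) (· ≤ ·) = Finset.sort s (· ≤ ·) ++ [k] := by
  apply sortEq
  · rw [List.pairwise_append]
    refine ⟨List.sortedLT_iff_pairwise.mp (Finset.sortedLT_sort s), by simp, ?_⟩
    intro a ha b hb
    simp only [List.mem_singleton] at hb
    subst hb
    exact h a (by simpa [Finset.mem_sort] using ha)
  · intro x
    simp only [List.mem_append, Finset.mem_sort, List.mem_singleton, Finset.mem_insert]
    tauto

lemma sortInsertInsertMax {i k : ℕ} {T : Finset ℕ} (hT : T ⊆ Finset.Ioo i k) (hik : i < k) :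
    Finset.sort (insert i (insert k T)) (· ≤ ·) =
      Finset.sort (insert i T) (· ≤ ·) ++ [k] := by
  rw [Finset.insert_comm]
  apply sortInsertMax
  intro b hb
  rcases Finset.mem_insert.mp hb with rfl | hb
  · exact hik
  · exact (Finset.mem_Ioo.mp (hT hb)).2

noncomputable def Pc (A : ℕ → ℕ → ℝ) (i j c : ℕ) : ℝ :=
  ∑ T ∈ (Finset.Ioo i (j + 1)).powerset,
    dSeq A (Finset.sort (insert i T) (· ≤ ·) ++ [c + 1])

lemma Pc_base (A : ℕ → ℕ → ℝ) (i c : ℕ) : Pc A i i c = dBlock A i c := by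
  have h : Finset.Ioo i (i + 1) = ∅ := by ext x; simp
  rw [Pc, h]
  rw [Finset.powerset_empty, Finset.sum_singleton]
  have : (insert i (∅:Finset ℕ)) = {i} := by simp
  rw [this, Finset.sort_singleton]
  show dSeq A [i, c + 1] = dBlock A i c
  simp [dSeq, dBlock]

lemma Pc_rec (A : ℕ → ℕ → ℝ) {i j : ℕ} (c : ℕ) (h : i ≤ j) :
    Pc A i (j + 1) c = Pc A i j c + Pc A i j j * dBlock A (j + 1) c := by
  have hI : Finset.Ioo i (j + 1 + 1) = insert (j + 1) (Finset.Ioo i (j + 1)) := by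
    ext x; simp only [Finset.mem_Ioo, Finset.mem_insert]; omega
  rw [Pc, hI, Finset.sum_powerset_insert (by simp)]
  congr 1
  rw [Pc, Finset.sum_mul]
  apply Finset.sum_congr rfl
  intro T hT
  rw [Finset.mem_powerset] at hT
  rw [sortInsertInsertMax hT (by omega), List.append_assoc]
  have : dSeq A (Finset.sort (insert i T) (· ≤ ·) ++ [j + 1, c + 1]) =
      dSeq A (Finset.sort (insert i T) (· ≤ ·) ++ [j + 1]) * dBlock A (j + 1) c := by
    rw [dSeq_concat_concat]; norm_num
  simpa using this

noncomputable def Dmat (A : ℕ → ℕ → ℝ) (i m c : ℕ) : Matrix (Fin (m + 1)) (Fin (m + 1)) ℝ :=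
  Matrix.of fun r s => if (s : ℕ) = m then A (i + r) c else A (i + r) (i + s)

lemma Dmat_rec {n : ℕ} {A : ℕ → ℕ → ℝ} (hA : TypeStar A n) {i m c : ℕ}
    (hi : 1 ≤ i) (hm : i + m + 1 ≤ n) (hc1 : 1 ≤ c) (hc2 : c ≤ n) :
    (Dmat A i (m + 1) c).det =
      A (i + m + 1) c * (Dmat A i m (i + m)).det
        - A (i + m + 1) (i + m) * (Dmat A i m c).det := by
  rw [Matrix.det_succ_row _ (Fin.last (m + 1))]
  rw [Fin.sum_univ_castSucc, Fin.sum_univ_castSucc]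
  have hz : ∀ s : Fin m,
      (-1 : ℝ) ^ ((Fin.last (m + 1) : ℕ) + ((s.castSucc.castSucc : Fin (m+2)) : ℕ)) *
        Dmat A i (m + 1) c (Fin.last (m + 1)) s.castSucc.castSucc *
        ((Dmat A i (m+1) c).submatrix (Fin.last (m+1)).succAbove
          (s.castSucc.castSucc).succAbove).det = 0 := by
    intro s
    have hs : ((s.castSucc.castSucc : Fin (m+2)) : ℕ) = (s : ℕ) := by simp
    have hlt : (s : ℕ) < m := s.isLt
    have hentry : Dmat A i (m + 1) c (Fin.last (m + 1)) s.castSucc.castSucc = 0 := by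
      show (if ((s.castSucc.castSucc : Fin (m+2)) : ℕ) = m + 1 then _ else
        A (i + (Fin.last (m+1) : ℕ)) (i + ((s.castSucc.castSucc : Fin (m+2)) : ℕ))) = (0:ℝ)
      rw [hs, if_neg (by omega)]
      simp only [Fin.val_last]
      exact (hA (i + (m+1)) (i + (s:ℕ)) (by omega) (by omega) (by omega) (by omega)).2.2 (by omega)
    rw [hentry]; ring
  rw [Finset.sum_congr rfl (fun s _ => hz s), Finset.sum_const_zero, zero_add]
  -- second-to-last term
  have hcoe2 : (((Fin.last m).castSucc : Fin (m + 2)) : ℕ) = m := by simp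
  have hterm2 : Dmat A i (m + 1) c (Fin.last (m + 1)) (Fin.last m).castSucc
      = A (i + m + 1) (i + m) := by
    show (if (((Fin.last m).castSucc : Fin (m+2)) : ℕ) = m + 1 then A (i + (Fin.last (m+1):ℕ)) c
      else A (i + (Fin.last (m+1):ℕ)) (i + (((Fin.last m).castSucc : Fin (m+2)) : ℕ))) = _
    rw [hcoe2, if_neg (by omega)]
    simp only [Fin.val_last]
    ring_nf
  have hsub2 : (Dmat A i (m+1) c).submatrix (Fin.last (m+1)).succAbove
      ((Fin.last m).castSucc).succAbove = Dmat A i m c := by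
    ext r s
    have hrow : ((Fin.last (m+1)).succAbove r : ℕ) = (r : ℕ) := by
      rw [Fin.succAbove_last]; simp
    have hcol : ((((Fin.last m).castSucc : Fin (m+2)).succAbove s) : ℕ) =
        if (s : ℕ) < m then (s : ℕ) else (s : ℕ) + 1 := by
      by_cases h : (s : ℕ) < m
      · rw [Fin.succAbove_of_castSucc_lt]
        · simp [h]
        · rw [Fin.lt_def]; simpa using h
      · rw [Fin.succAbove_of_lt_succ]
        · simp [h]
        · rw [Fin.lt_def]; simp; omega
    show (if ((((Fin.last m).castSucc : Fin (m+2)).succAbove s : Fin (m+2)) : ℕ) = m + 1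
        then A (i + ((Fin.last (m+1)).succAbove r : ℕ)) c
        else A (i + ((Fin.last (m+1)).succAbove r : ℕ))
          (i + ((((Fin.last m).castSucc : Fin (m+2)).succAbove s : Fin (m+2)) : ℕ)))
      = (if (s : ℕ) = m then A (i + (r:ℕ)) c else A (i + (r:ℕ)) (i + (s:ℕ)))
    rw [hrow, hcol]
    by_cases h : (s : ℕ) < m
    · rw [if_pos h, if_neg (by omega), if_neg (by omega)]
    · have hsm : (s : ℕ) = m := by omega
      rw [if_neg h, if_pos (by omega), if_pos hsm]
  -- last term
  have hterm3 : Dmat A i (m + 1) c (Fin.last (m + 1)) (Fin.last (m + 1)) = A (i + m + 1) c := by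
    show (if ((Fin.last (m+1) : Fin (m+2)) : ℕ) = m + 1 then A (i + (Fin.last (m+1):ℕ)) c
      else _) = _
    rw [if_pos (by simp)]
    simp only [Fin.val_last]
    ring_nf
  have hsub3 : (Dmat A i (m+1) c).submatrix (Fin.last (m+1)).succAbove
      (Fin.last (m+1)).succAbove = Dmat A i m (i + m) := by
    ext r s
    have hrow : ((Fin.last (m+1)).succAbove r : ℕ) = (r : ℕ) := by
      rw [Fin.succAbove_last]; simp
    show (if (((Fin.last (m+1)).succAbove s : Fin (m+2)) : ℕ) = m + 1
        then A (i + ((Fin.last (m+1)).succAbove r : ℕ)) c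
        else A (i + ((Fin.last (m+1)).succAbove r : ℕ))
          (i + (((Fin.last (m+1)).succAbove s : Fin (m+2)) : ℕ)))
      = (if (s : ℕ) = m then A (i + (r:ℕ)) (i + m) else A (i + (r:ℕ)) (i + (s:ℕ)))
    have hcol : (((Fin.last (m+1)).succAbove s : Fin (m+2)) : ℕ) = (s : ℕ) := by
      rw [Fin.succAbove_last]; simp
    rw [hrow, hcol, if_neg (by omega)]
    by_cases h : (s : ℕ) = m
    · rw [if_pos h, h]
    · rw [if_neg h]
  rw [hterm2, hsub2, hterm3, hsub3, hcoe2]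
  have hsign2 : (-1 : ℝ) ^ ((Fin.last (m + 1) : ℕ) + m) = (-1 : ℝ) ^ (2 * m + 1) := by
    simp only [Fin.val_last]; ring_nf
  have hsign3 : (-1 : ℝ) ^ ((Fin.last (m + 1) : ℕ) + ((Fin.last (m+1) : Fin (m+2)) : ℕ))
      = (-1 : ℝ) ^ (2 * (m + 1)) := by
    simp only [Fin.val_last]; ring_nf
  rw [hsign2, hsign3, Odd.neg_one_pow ⟨m, by ring⟩, Even.neg_one_pow ⟨m + 1, by ring⟩]
  ring

lemma Pc_eq_det {n : ℕ} {A : ℕ → ℕ → ℝ} (hA : TypeStar A n) {i : ℕ} (hi : 1 ≤ i) :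
    ∀ m, ∀ c, i + m ≤ n → i + m ≤ c → c ≤ n →
      Pc A i (i + m) c = (Dmat A i m c).det * ∏ r ∈ Finset.Icc (i + m + 1) c, |A r (r - 1)| := by
  intro m
  induction m with
  | zero =>
    intro c _ _ _
    rw [Nat.add_zero, Pc_base]
    have hdet : (Dmat A i 0 c).det = A i c := by
      rw [Matrix.det_fin_one]
      simp [Dmat]
    rw [hdet, dBlock]
  | succ m ih =>
    intro c hmn hmc hcn
    have h1 : i + (m + 1) = (i + m) + 1 := by ring
    rw [h1, Pc_rec A c (by omega)]
    rw [ih c (by omega) (by omega) hcn, ih (i + m) (by omega) (by omega) (by omega)]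
    rw [Dmat_rec hA hi (by omega) (by omega) hcn]
    have hIcc : Finset.Icc (i + m + 1) c = insert (i + m + 1) (Finset.Icc (i + m + 2) c) := by
      ext x; simp only [Finset.mem_Icc, Finset.mem_insert]; omega
    rw [hIcc, Finset.prod_insert (by simp)]
    have hIcc2 : Finset.Icc (i + m + 1) (i + m) = ∅ := by
      apply Finset.Icc_eq_empty; omega
    rw [hIcc2, Finset.prod_empty, mul_one]
    have habs : |A (i + m + 1) ((i + m + 1) - 1)| = -A (i + m + 1) (i + m) := by
      have h2 : (i + m + 1) - 1 = i + m := by omega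
      rw [h2]
      apply abs_of_neg
      exact (hA (i + m + 1) (i + m) (by omega) (by omega) (by omega) (by omega)).2.1 rfl
    rw [habs]
    have hdb : dBlock A (i + m + 1) c
        = A (i + m + 1) c * ∏ r ∈ Finset.Icc (i + m + 2) c, |A r (r - 1)| := by
      rw [dBlock]
    rw [hdb]
    ring

lemma subDet_eq_Pc {n : ℕ} {A : ℕ → ℕ → ℝ} (hA : TypeStar A n) {i j : ℕ}
    (hi : 1 ≤ i) (hij : i ≤ j) (hjn : j ≤ n) :
    subDet A i j = Pc A i j j := by
  obtain ⟨m, rfl⟩ : ∃ m, j = i + m := ⟨j - i, by omega⟩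
  rw [Pc_eq_det hA hi m (i + m) (by omega) le_rfl (by omega)]
  rw [Finset.Icc_eq_empty (by omega), Finset.prod_empty, mul_one]
  rw [subDet]
  have h : i + m - i = m := by omega
  rw [h]
  congr 1
  ext r s
  show A (i + (r : ℕ)) (i + (s : ℕ))
    = if (s : ℕ) = m then A (i + (r : ℕ)) (i + m) else A (i + (r : ℕ)) (i + (s : ℕ))
  by_cases hs : (s : ℕ) = m
  · rw [if_pos hs, hs]
  · rw [if_neg hs]

lemma dBlock_nonneg {n : ℕ} {A : ℕ → ℕ → ℝ} (hA : TypeStar A n) {a b : ℕ}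
    (ha : 1 ≤ a) (hab : a < b) (hb : b ≤ n + 1) : 0 ≤ dBlock A a (b - 1) := by
  apply mul_nonneg
  · exact le_of_lt ((hA a (b - 1) ha (by omega) (by omega) (by omega)).1 (by omega))
  · exact Finset.prod_nonneg fun r _ => abs_nonneg _

lemma dSeq_nonneg {n : ℕ} {A : ℕ → ℕ → ℝ} (hA : TypeStar A n) :
    ∀ l : List ℕ, l.Pairwise (· < ·) → (∀ x ∈ l, 1 ≤ x ∧ x ≤ n + 1) → 0 ≤ dSeq A l := by
  intro l
  induction l with
  | nil => intro _ _; simp [dSeq]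
  | cons a t ih =>
    intro hs hb
    cases t with
    | nil => rw [dSeq_single]; norm_num
    | cons b t2 =>
      rw [dSeq_cons_cons]
      rcases List.pairwise_cons.mp hs with ⟨hlt, hs2⟩
      apply mul_nonneg
      · exact dBlock_nonneg hA (hb a (by simp)).1 (hlt b (by simp)) (hb b (by simp)).2
      · exact ih hs2 fun x hx => hb x (by simp [hx])

lemma sort_whole {n : ℕ} {A : ℕ → ℕ → ℝ} (hA : TypeStar A n) {j : ℕ} (hj1 : 1 ≤ j) (hjn : j + 1 ≤ n)
    {S1 S2 : Finset ℕ} (hS1 : S1 ⊆ Finset.Ioo 1 (j + 1)) (hS2 : S2 ⊆ Finset.Ioo (j + 1) (n + 1)) :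
    Finset.sort (insert 1 (insert (n + 1) (insert (j + 1) (S1 ∪ S2)))) (· ≤ ·) =
      Finset.sort (insert 1 S1) (· ≤ ·) ++
        (j + 1) :: (Finset.sort S2 (· ≤ ·) ++ [n + 1]) := by
  apply sortEq
  · rw [List.pairwise_append]
    refine ⟨List.sortedLT_iff_pairwise.mp (Finset.sortedLT_sort _), ?_, ?_⟩
    · rw [List.pairwise_cons]
      constructor
      · intro b hb
        rcases List.mem_append.mp hb with hb | hb
        · exact (Finset.mem_Ioo.mp (hS2 (by simpa [Finset.mem_sort] using hb))).1
        · simp only [List.mem_singleton] at hb; omega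
      · rw [List.pairwise_append]
        refine ⟨List.sortedLT_iff_pairwise.mp (Finset.sortedLT_sort _), by simp, ?_⟩
        intro a ha b hb
        simp only [List.mem_singleton] at hb; subst hb
        exact (Finset.mem_Ioo.mp (hS2 (by simpa [Finset.mem_sort] using ha))).2
    · intro a ha b hb
      have ha' : a = 1 ∨ a ∈ S1 := by simpa [Finset.mem_sort] using ha
      have ha2 : a < j + 1 := by
        rcases ha' with rfl | ha'
        · omega
        · exact (Finset.mem_Ioo.mp (hS1 ha')).2
      have hb2 : j + 1 ≤ b := by
        rcases List.mem_cons.mp hb with rfl | hb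
        · omega
        · rcases List.mem_append.mp hb with hb | hb
          · exact le_of_lt (Finset.mem_Ioo.mp (hS2 (by simpa [Finset.mem_sort] using hb))).1
          · simp only [List.mem_singleton] at hb; omega
      omega
  · intro x
    simp only [List.mem_append, Finset.mem_sort, List.mem_cons, List.mem_singleton,
      Finset.mem_insert, Finset.mem_union]
    tauto

/-- For a type (*) matrix, `det M(1,j) · det M(j+1,n)` equals the sum of `d_M(e)` over
the increasing sequences from `1` to `n+1` containing `j+1`; in particular it is at most
`det M`. -/
theorem stmt10 (n : ℕ) (A : ℕ → ℕ → ℝ) (hA : TypeStar A n)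
    (j : ℕ) (hj1 : 1 ≤ j) (hj2 : j ≤ n - 1) :
    subDet A 1 j * subDet A (j + 1) n =
      (∑ T ∈ (Finset.Ioo 1 (n + 1)).powerset.filter (fun T => j + 1 ∈ T),
        dSeq A (Finset.sort (insert 1 (insert (n + 1) T)) (· ≤ ·))) ∧
    subDet A 1 j * subDet A (j + 1) n ≤ subDet A 1 n := by
  have hn2 : 2 ≤ n := by omega
  have hjn : j + 1 ≤ n := by omega
  have key : (∑ T ∈ (Finset.Ioo 1 (n + 1)).powerset.filter (fun T => j + 1 ∈ T),
        dSeq A (Finset.sort (insert 1 (insert (n + 1) T)) (· ≤ ·)))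
      = subDet A 1 j * subDet A (j + 1) n := by
    rw [subDet_eq_Pc hA le_rfl hj1 (by omega), subDet_eq_Pc hA (by omega) hjn le_rfl]
    rw [Pc, Pc, Finset.sum_mul_sum]
    rw [← Finset.sum_product']
    apply Finset.sum_nbij' (i := fun T => (T ∩ Finset.Ioo 1 (j + 1), T ∩ Finset.Ioo (j + 1) (n + 1)))
      (j := fun p => insert (j + 1) (p.1 ∪ p.2))
    · intro T hT
      simp only [Finset.mem_filter, Finset.mem_powerset] at hT
      simp only [Finset.mem_product, Finset.mem_powerset]
      exact ⟨Finset.inter_subset_right, Finset.inter_subset_right⟩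
    · intro p hp
      simp only [Finset.mem_product, Finset.mem_powerset] at hp
      simp only [Finset.mem_filter, Finset.mem_powerset]
      constructor
      · intro x hx
        rcases Finset.mem_insert.mp hx with rfl | hx
        · simp only [Finset.mem_Ioo]; omega
        · rcases Finset.mem_union.mp hx with hx | hx
          · have := Finset.mem_Ioo.mp (hp.1 hx); simp only [Finset.mem_Ioo]; omega
          · have := Finset.mem_Ioo.mp (hp.2 hx); simp only [Finset.mem_Ioo]; omega
      · exact Finset.mem_insert_self _ _
    · intro T hT
      simp only [Finset.mem_filter, Finset.mem_powerset] at hT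
      ext x
      simp only [Finset.mem_insert, Finset.mem_union, Finset.mem_inter, Finset.mem_Ioo]
      constructor
      · rintro (rfl | ⟨hx, _⟩ | ⟨hx, _⟩) <;> [exact hT.2; exact hx; exact hx]
      · intro hx
        have hb := Finset.mem_Ioo.mp (hT.1 hx)
        simp only [hx, true_and]
        omega
    · intro p hp
      obtain ⟨S1, S2⟩ := p
      simp only [Finset.mem_product, Finset.mem_powerset] at hp
      obtain ⟨hS1, hS2⟩ := hp
      have e1 : insert (j + 1) (S1 ∪ S2) ∩ Finset.Ioo 1 (j + 1) = S1 := by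
        ext x
        simp only [Finset.mem_inter, Finset.mem_insert, Finset.mem_union, Finset.mem_Ioo]
        constructor
        · rintro ⟨rfl | hx | hx, hlo, hhi⟩
          · omega
          · exact hx
          · have := Finset.mem_Ioo.mp (hS2 hx); omega
        · intro hx
          have := Finset.mem_Ioo.mp (hS1 hx)
          exact ⟨Or.inr (Or.inl hx), this.1, this.2⟩
      have e2 : insert (j + 1) (S1 ∪ S2) ∩ Finset.Ioo (j + 1) (n + 1) = S2 := by
        ext x
        simp only [Finset.mem_inter, Finset.mem_insert, Finset.mem_union, Finset.mem_Ioo]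
        constructor
        · rintro ⟨rfl | hx | hx, hlo, hhi⟩
          · omega
          · have := Finset.mem_Ioo.mp (hS1 hx); omega
          · exact hx
        · intro hx
          have := Finset.mem_Ioo.mp (hS2 hx)
          exact ⟨Or.inr (Or.inr hx), this.1, this.2⟩
      simp only [e1, e2]
    · intro T hT
      simp only [Finset.mem_filter, Finset.mem_powerset] at hT
      set S1 := T ∩ Finset.Ioo 1 (j + 1) with hS1def
      set S2 := T ∩ Finset.Ioo (j + 1) (n + 1) with hS2def
      have hS1 : S1 ⊆ Finset.Ioo 1 (j + 1) := Finset.inter_subset_right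
      have hS2 : S2 ⊆ Finset.Ioo (j + 1) (n + 1) := Finset.inter_subset_right
      have hTeq : insert (j + 1) (S1 ∪ S2) = T := by
        ext x
        simp only [Finset.mem_insert, Finset.mem_union, hS1def, hS2def, Finset.mem_inter,
          Finset.mem_Ioo]
        constructor
        · rintro (rfl | ⟨hx, _⟩ | ⟨hx, _⟩) <;> [exact hT.2; exact hx; exact hx]
        · intro hx
          have hb := Finset.mem_Ioo.mp (hT.1 hx)
          simp only [hx, true_and]
          omega
      have hstep : Finset.sort (insert 1 (insert (n + 1) T)) (· ≤ ·) =
          Finset.sort (insert 1 S1) (· ≤ ·) ++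
            (j + 1) :: (Finset.sort S2 (· ≤ ·) ++ [n + 1]) := by
        rw [← hTeq]
        exact sort_whole hA hj1 hjn hS1 hS2
      rw [hstep, dSeq_append]
      congr 1
      have hins : Finset.sort (insert (j + 1) S2) (· ≤ ·) = (j + 1) :: Finset.sort S2 (· ≤ ·) := by
        apply Finset.sort_insert
        · intro b hb
          exact le_of_lt (Finset.mem_Ioo.mp (hS2 hb)).1
        · intro hb
          have := Finset.mem_Ioo.mp (hS2 hb)
          omega
      rw [hins, List.cons_append]
  constructor
  · exact key.symm
  · rw [← key]
    rw [subDet_eq_Pc hA le_rfl (by omega) le_rfl, Pc]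
    have hcongr : ∀ T ∈ (Finset.Ioo 1 (n + 1)).powerset,
        dSeq A (Finset.sort (insert 1 T) (· ≤ ·) ++ [n + 1]) =
          dSeq A (Finset.sort (insert 1 (insert (n + 1) T)) (· ≤ ·)) := by
      intro T hT
      rw [Finset.mem_powerset] at hT
      rw [sortInsertInsertMax hT (by omega)]
    rw [Finset.sum_congr rfl hcongr]
    apply Finset.sum_le_sum_of_subset_of_nonneg (Finset.filter_subset _ _)
    intro T hT _
    rw [Finset.mem_powerset] at hT
    apply dSeq_nonneg hA
    · exact List.sortedLT_iff_pairwise.mp (Finset.sortedLT_sort _)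
    · intro x hx
      rw [Finset.mem_sort] at hx
      rcases Finset.mem_insert.mp hx with rfl | hx
      · omega
      · rcases Finset.mem_insert.mp hx with rfl | hx
        · omega
        · have := Finset.mem_Ioo.mp (hT hx); omega
end

section
/- Backward recursion for the moment ratios: with R^n_{j,k} = det(U_k^r W^{j,n})/det(W^{j,n}), one has R^n_{j,k} = (m_{k+1} + γ_j R^n_{j+1,k+1})/(m₁ + γ_j R^n_{j+1,1}). -/
open MeasureTheory

/-- The moment matrix `W^{j,n}` (here of size `s`, with subdiagonal entries
`-γ_start, -γ_{start+1}, …`), with first row `(m_{1+shift}, …, m_{s+shift})` and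
Toeplitz moment entries `m_{k-i+1}` above the subdiagonal. `shift = k` gives `U_k^r W`. -/
noncomputable def Wgen (m γ : ℕ → ℝ) (shift start s : ℕ) : Matrix (Fin s) (Fin s) ℝ :=
  Matrix.of fun i k =>
    if (i : ℕ) = 0 then m ((k : ℕ) + 1 + shift)
    else if (k : ℕ) + 1 = (i : ℕ) then -γ (start + (i : ℕ) - 1)
    else if (i : ℕ) ≤ (k : ℕ) then m ((k : ℕ) - (i : ℕ) + 1)
    else 0

/-!
Expanding along the first column gives
`det (U_t W^{j,n}) = m_{t+1} det W^{j+1,n} + γ_j det (U_{t+1} W^{j+1,n})`,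
and the recursion follows by dividing by `det W^{j+1,n}` when it is nonzero. All terms of
these expansions are nonnegative, so `det W^{j+1,n} = 0` forces `m_{s+1} = 0`; then `Q` is the
point mass at `0`, every moment `m_i` with `i ≥ 1` vanishes, and both sides are `0 / 0 = 0`.
-/

section Wgen

variable (m γ : ℕ → ℝ)

theorem Wgen_submatrix_zero_succ (t j n : ℕ) :
    (Wgen m γ t j (n + 2)).submatrix (Fin.succAbove 0) Fin.succ = Wgen m γ 0 (j + 1) (n + 1) := by
  ext i k
  simp only [Wgen, Matrix.submatrix_apply, Matrix.of_apply, Fin.succAbove_zero, Fin.val_succ]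
  split_ifs <;> grind

theorem Wgen_submatrix_one_succ (t j n : ℕ) :
    (Wgen m γ t j (n + 2)).submatrix (Fin.succAbove 1) Fin.succ =
      Wgen m γ (t + 1) (j + 1) (n + 1) := by
  ext i k
  rcases Fin.eq_zero_or_eq_succ i with rfl | ⟨i, rfl⟩
  · simp [Wgen, add_assoc, add_comm 1 t]
  · rw [Matrix.submatrix_apply, show (1 : Fin (n + 2)).succAbove i.succ = i.succ.succ from
      Fin.succAbove_of_le_castSucc _ _ (by simp [Fin.le_def])]
    simp [Wgen]

theorem det_Wgen_succ_succ (t j n : ℕ) :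
    (Wgen m γ t j (n + 2)).det =
      m (t + 1) * (Wgen m γ 0 (j + 1) (n + 1)).det +
        γ j * (Wgen m γ (t + 1) (j + 1) (n + 1)).det := by
  have below_subdiagonal (i : Fin n) : Wgen m γ t j (n + 2) i.succ.succ 0 = 0 := by simp [Wgen]
  rw [Matrix.det_succ_column_zero, Fin.sum_univ_succ, Fin.sum_univ_succ,
    Finset.sum_eq_zero fun i _ => by rw [below_subdiagonal, mul_zero, zero_mul],
    show (Fin.succ 0 : Fin (n + 2)) = 1 from rfl, Wgen_submatrix_zero_succ,
    Wgen_submatrix_one_succ]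
  simp [Wgen, add_comm 1 t]

variable {m γ}

theorem det_Wgen_nonneg (hm : ∀ k, 0 ≤ m k) (hγ : ∀ i, 0 ≤ γ i) :
    ∀ n t j, 0 ≤ (Wgen m γ t j n).det
  | 0, _, _ => by simp
  | 1, t, j => by simpa [Wgen] using hm (1 + t)
  | n + 2, t, j => by
    rw [det_Wgen_succ_succ]
    exact add_nonneg (mul_nonneg (hm _) (det_Wgen_nonneg hm hγ _ _ _))
      (mul_nonneg (hγ j) (det_Wgen_nonneg hm hγ _ _ _))

theorem moment_eq_zero_of_det_Wgen_eq_zero (hm : ∀ k, 0 ≤ m k) (hγ : ∀ i, 0 < γ i) :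
    ∀ n t j, (Wgen m γ t j (n + 1)).det = 0 → m (t + n + 1) = 0
  | 0, t, j, h => by simpa [Wgen, add_comm 1 t] using h
  | n + 1, t, j, h => by
    have hdet := det_Wgen_nonneg hm fun i => (hγ i).le
    rw [det_Wgen_succ_succ, add_eq_zero_iff_of_nonneg (mul_nonneg (hm _) (hdet _ _ _))
      (mul_nonneg (hγ j).le (hdet _ _ _)), mul_eq_zero, mul_eq_zero] at h
    have := moment_eq_zero_of_det_Wgen_eq_zero hm hγ n (t + 1) (j + 1)
      (h.2.resolve_left (hγ j).ne')
    rwa [add_right_comm t 1 n, add_assoc t n 1] at this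

theorem det_Wgen_eq_zero (hm : ∀ k, 1 ≤ k → m k = 0) (t j n : ℕ) :
    (Wgen m γ t j (n + 1)).det = 0 :=
  Matrix.det_eq_zero_of_row_eq_zero 0 fun k => by
    simp [Wgen, hm _ (by omega : 1 ≤ (k : ℕ) + 1 + t)]

end Wgen

section Moments

variable {Q : Measure ℝ} [IsFiniteMeasure Q]

theorem integral_pow_eq_zero_of_integral_pow_eq_zero (hQ : ∀ᵐ x ∂Q, x ∈ Set.Icc (0 : ℝ) 1)
    {n : ℕ} (hn : ∫ x, x ^ (n + 1) ∂Q = 0) {k : ℕ} (hk : 1 ≤ k) : ∫ x, x ^ k ∂Q = 0 := by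
  have hint : Integrable (fun x : ℝ => x ^ (n + 1)) Q :=
    Integrable.of_bound (by fun_prop) 1 <| hQ.mono fun x hx => by
      simpa [abs_of_nonneg hx.1] using pow_le_one₀ hx.1 hx.2
  have hzero : (fun x : ℝ => x ^ (n + 1)) =ᵐ[Q] 0 :=
    (integral_eq_zero_iff_of_nonneg_ae (hQ.mono fun x hx => pow_nonneg hx.1 _) hint).1 hn
  rw [integral_congr_ae (g := 0) (hzero.mono fun x hx => by
    simp_all [pow_eq_zero_iff, Nat.one_le_iff_ne_zero.1 hk])]
  simp

end Moments

theorem stmt14_general (Q : Measure ℝ) [IsProbabilityMeasure Q] (hQsupp : Q (Set.Icc 0 1) = 1)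
    (m : ℕ → ℝ) (hm : ∀ k, m k = ∫ x, x ^ k ∂Q)
    (γ : ℕ → ℝ) (hγ : ∀ i, 0 < γ i)
    (j s k : ℕ) :
    (Wgen m γ k j (s + 2)).det / (Wgen m γ 0 j (s + 2)).det =
      (m (k + 1) + γ j *
          ((Wgen m γ (k + 1) (j + 1) (s + 1)).det / (Wgen m γ 0 (j + 1) (s + 1)).det)) /
        (m 1 + γ j *
          ((Wgen m γ 1 (j + 1) (s + 1)).det / (Wgen m γ 0 (j + 1) (s + 1)).det)) := by
  have hQ : ∀ᵐ x ∂Q, x ∈ Set.Icc (0 : ℝ) 1 :=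
    (ae_mem_iff_measure_eq measurableSet_Icc.nullMeasurableSet).2 (by simp [hQsupp])
  have hm_nonneg (i : ℕ) : 0 ≤ m i :=
    hm i ▸ integral_nonneg_of_ae (hQ.mono fun x hx => pow_nonneg hx.1 i)
  rw [det_Wgen_succ_succ, det_Wgen_succ_succ]
  by_cases hA : (Wgen m γ 0 (j + 1) (s + 1)).det = 0
  · have hm_eq_zero (i : ℕ) (hi : 1 ≤ i) : m i = 0 := by
      have := moment_eq_zero_of_det_Wgen_eq_zero hm_nonneg hγ s 0 (j + 1) hA
      rw [hm] at this ⊢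
      exact integral_pow_eq_zero_of_integral_pow_eq_zero hQ (by simpa using this) hi
    simp [hA, hm_eq_zero 1 le_rfl, det_Wgen_eq_zero hm_eq_zero]
  · rw [← div_div_div_cancel_right₀ hA]
    congr 1 <;> field_simp

/-- Backward recursion for the moment ratios `Rⁿ_{j,k} = det(U_k^r W^{j,n})/det(W^{j,n})`:
`Rⁿ_{j,k} = (m_{k+1} + γ_j Rⁿ_{j+1,k+1})/(m₁ + γ_j Rⁿ_{j+1,1})`. Here `W^{j,n}` has
size `s+2` and `W^{j+1,n}` has size `s+1`. -/
theorem stmt14 (Q : Measure ℝ) [IsProbabilityMeasure Q] (hQsupp : Q (Set.Icc 0 1) = 1)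
    (m : ℕ → ℝ) (hm : ∀ k, m k = ∫ x, x ^ k ∂Q)
    (γ : ℕ → ℝ) (hγ : ∀ i, 0 < γ i)
    (j s k : ℕ) (hj : 1 ≤ j) (hk : 1 ≤ k) :
    (Wgen m γ k j (s + 2)).det / (Wgen m γ 0 j (s + 2)).det =
      (m (k + 1) + γ j *
          ((Wgen m γ (k + 1) (j + 1) (s + 1)).det / (Wgen m γ 0 (j + 1) (s + 1)).det)) /
        (m 1 + γ j *
          ((Wgen m γ 1 (j + 1) (s + 1)).det / (Wgen m γ 0 (j + 1) (s + 1)).det)) :=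
  stmt14_general Q hQsupp m hm γ hγ j s k
end
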